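/- arXiv:0704.0502 — 6 statements merged into one kernel-verified Lean document; each statement's English description precedes it below -/
import Mathlib

section
/- Let Q be a quadratic form on a 2-dimensional F_2-vector space V whose polar bilinear form is nondegenerate. Then (V,Q) is isometric either to H_0 or to H_1; that is, there is a linear equivalence f from V to F_2^2 with Q = H_0 ∘ f, or a linear equivalence f from V to F_2^2 with Q = H_1 ∘ f. -/
open QuadraticMap

/-- The bilinear map whose associated quadratic form is `H₀(x,y) = x*y`. -/
noncomputable def B0 : LinearMap.BilinMap (ZMod 2) (ZMod 2 × ZMod 2) (ZMod 2) :=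
  LinearMap.mk₂ (ZMod 2) (fun v w => v.1 * w.2)
    (fun m₁ m₂ n => by simp [add_mul])
    (fun c m n => by simp [mul_assoc])
    (fun m n₁ n₂ => by simp [mul_add])
    (fun c m n => by simp [mul_left_comm])

/-- The hyperbolic plane `H₀(x,y) = x*y` (Arf invariant 0). -/
noncomputable def H0 : QuadraticForm (ZMod 2) (ZMod 2 × ZMod 2) := B0.toQuadraticMap

/-- The bilinear map whose associated quadratic form is `H₁(x,y) = x² + x*y + y²`. -/
noncomputable def B1 : LinearMap.BilinMap (ZMod 2) (ZMod 2 × ZMod 2) (ZMod 2) :=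
  LinearMap.mk₂ (ZMod 2) (fun v w => v.1 * w.1 + v.1 * w.2 + v.2 * w.2)
    (fun m₁ m₂ n => by simp [add_mul]; ring)
    (fun c m n => by simp [mul_assoc, mul_add])
    (fun m n₁ n₂ => by simp [mul_add]; ring)
    (fun c m n => by simp [mul_left_comm, mul_add])

/-- The quadratic form `H₁(x,y) = x² + x*y + y²` (Arf invariant 1). -/
noncomputable def H1 : QuadraticForm (ZMod 2) (ZMod 2 × ZMod 2) := B1.toQuadraticMap

noncomputable def shearL : (ZMod 2 × ZMod 2) ≃ₗ[ZMod 2] ZMod 2 × ZMod 2 :=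
  LinearEquiv.ofLinear
    (LinearMap.prod (LinearMap.fst _ _ _) ((LinearMap.fst _ _ _) + (LinearMap.snd _ _ _)))
    (LinearMap.prod (LinearMap.fst _ _ _) ((LinearMap.fst _ _ _) + (LinearMap.snd _ _ _)))
    (LinearMap.ext fun v => by
      have h : ∀ x y : ZMod 2, x + (x + y) = y := by decide
      simp [LinearMap.prod_apply, h v.1 v.2])
    (LinearMap.ext fun v => by
      have h : ∀ x y : ZMod 2, x + (x + y) = y := by decide
      simp [LinearMap.prod_apply, h v.1 v.2])

@[simp] lemma shearL_apply (v : ZMod 2 × ZMod 2) : shearL v = (v.1, v.1 + v.2) := rfl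

noncomputable def shearR : (ZMod 2 × ZMod 2) ≃ₗ[ZMod 2] ZMod 2 × ZMod 2 :=
  LinearEquiv.ofLinear
    (LinearMap.prod ((LinearMap.fst _ _ _) + (LinearMap.snd _ _ _)) (LinearMap.snd _ _ _))
    (LinearMap.prod ((LinearMap.fst _ _ _) + (LinearMap.snd _ _ _)) (LinearMap.snd _ _ _))
    (LinearMap.ext fun v => by
      have h : ∀ x y : ZMod 2, (x + y) + y = x := by decide
      simp [LinearMap.prod_apply, h v.1 v.2])
    (LinearMap.ext fun v => by
      have h : ∀ x y : ZMod 2, (x + y) + y = x := by decide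
      simp [LinearMap.prod_apply, h v.1 v.2])

@[simp] lemma shearR_apply (v : ZMod 2 × ZMod 2) : shearR v = (v.1 + v.2, v.2) := rfl

lemma H0_apply (v : ZMod 2 × ZMod 2) : H0 v = v.1 * v.2 := by
  simp [H0, B0, LinearMap.BilinMap.toQuadraticMap_apply]

lemma H1_apply (v : ZMod 2 × ZMod 2) : H1 v = v.1 * v.1 + v.1 * v.2 + v.2 * v.2 := by
  simp [H1, B1, LinearMap.BilinMap.toQuadraticMap_apply]

/-- A quadratic form on a `2`-dimensional `𝔽₂`-vector space whose polar bilinear form is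
nondegenerate is isometric either to `H₀` or to `H₁`. -/
theorem isometric_H0_or_H1_of_dim_two
    (V : Type) [AddCommGroup V] [Module (ZMod 2) V] [FiniteDimensional (ZMod 2) V]
    (hdim : Module.finrank (ZMod 2) V = 2)
    (Q : QuadraticForm (ZMod 2) V)
    (hQ : ∀ v : V, (∀ w : V, polar Q v w = 0) → v = 0) :
    (∃ f : V ≃ₗ[ZMod 2] (ZMod 2 × ZMod 2), ∀ v : V, H0 (f v) = Q v) ∨
    (∃ f : V ≃ₗ[ZMod 2] (ZMod 2 × ZMod 2), ∀ v : V, H1 (f v) = Q v) := by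
  classical
  have bV : Module.Basis (Fin 2) (ZMod 2) V := Module.finBasisOfFinrankEq (ZMod 2) V hdim
  set e1 := bV 0 with he1def
  set e2 := bV 1 with he2def
  have hrepr : ∀ v : V, v = bV.repr v 0 • e1 + bV.repr v 1 • e2 := fun v => by
    conv_lhs => rw [← bV.sum_repr v]
    rw [Fin.sum_univ_two]
  have htwo : ∀ x : ZMod 2, (2 : ℕ) • x = 0 := by decide
  have hp11 : polar Q e1 e1 = 0 := by rw [polar_self, htwo]
  have hp12 : polar Q e1 e2 = 1 := by
    rcases (by decide : ∀ x : ZMod 2, x = 0 ∨ x = 1) (polar Q e1 e2) with h | h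
    · exfalso
      refine bV.ne_zero 0 (hQ e1 fun w => ?_)
      rw [hrepr w, polar_add_right, polar_smul_right, polar_smul_right, hp11, h]
      simp
    · exact h
  have hQval : ∀ v : V, Q v = bV.repr v 0 * Q e1 + bV.repr v 1 * Q e2
      + bV.repr v 0 * bV.repr v 1 := fun v => by
    have hsq : ∀ x : ZMod 2, x * x = x := by decide
    conv_lhs => rw [hrepr v]
    rw [show ∀ x y : V, Q (x + y) = Q x + Q y + polar Q x y from fun x y => by
      simp [polar]]
    rw [QuadraticMap.map_smul, QuadraticMap.map_smul, polar_smul_left, polar_smul_right, hp12]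
    simp only [smul_eq_mul, hsq, mul_one]
  set f0 : V ≃ₗ[ZMod 2] ZMod 2 × ZMod 2 := bV.equivFun.trans (LinearEquiv.finTwoArrow _ _)
    with hf0def
  have hf0 : ∀ v : V, f0 v = (bV.repr v 0, bV.repr v 1) := fun v => by
    rw [hf0def]; simp [Module.Basis.equivFun_apply]
  rcases (by decide : ∀ x : ZMod 2, x = 0 ∨ x = 1) (Q e1) with h1 | h1 <;>
    rcases (by decide : ∀ x : ZMod 2, x = 0 ∨ x = 1) (Q e2) with h2 | h2
  · -- (0,0) : H0 via f0
    refine Or.inl ⟨f0, fun v => ?_⟩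
    rw [hf0, H0_apply, hQval, h1, h2]; ring
  · -- (0,1) : H0 via shearR ∘ f0
    refine Or.inl ⟨f0.trans shearR, fun v => ?_⟩
    have key : ∀ a b : ZMod 2, (a + b) * b = a * 0 + b * 1 + a * b := by decide
    rw [LinearEquiv.trans_apply, hf0, shearR_apply, H0_apply, hQval, h1, h2]
    exact key _ _
  · -- (1,0) : H0 via shearL ∘ f0
    refine Or.inl ⟨f0.trans shearL, fun v => ?_⟩
    have key : ∀ a b : ZMod 2, a * (a + b) = a * 1 + b * 0 + a * b := by decide
    rw [LinearEquiv.trans_apply, hf0, shearL_apply, H0_apply, hQval, h1, h2]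
    exact key _ _
  · -- (1,1) : H1 via f0
    refine Or.inr ⟨f0, fun v => ?_⟩
    have key : ∀ a b : ZMod 2, a * a + a * b + b * b = a * 1 + b * 1 + a * b := by decide
    rw [hf0, H1_apply, hQval, h1, h2]
    exact key _ _
end

section
/- (Witt's theorem for possibly degenerate subspaces over F_2.) Let V be a finite-dimensional F_2-vector space with a quadratic form Q whose polar bilinear form is nondegenerate, let D and D' be subspaces of V, and let f : D → D' be a linear equivalence such that Q(f d) = Q(d) for all d in D. Then there exists a linear equivalence g : V → V with Q(g v) = Q(v) for all v in V and g(d) = f(d) for all d in D. -/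
open QuadraticMap

private lemma z2cases (a : ZMod 2) : a = 0 ∨ a = 1 := by revert a; decide

private lemma z2add (a : ZMod 2) : a + a = 0 := by revert a; decide

private lemma z2one {a : ZMod 2} (h : a ≠ 0) : a = 1 := by revert a h; decide

private lemma addV_self {V : Type} [AddCommGroup V] [Module (ZMod 2) V] (v : V) :
    v + v = 0 := by
  rw [← two_smul (ZMod 2) v, show (2 : ZMod 2) = 0 from rfl, zero_smul]

private lemma eq_of_add_eq_zero' {V : Type} [AddCommGroup V] [Module (ZMod 2) V] {a b : V}
    (h : a + b = 0) : a = b := by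
  have : a + b + b = b := by rw [h, zero_add]
  rwa [add_assoc, addV_self, add_zero] at this

/-- The orthogonal transvection attached to a vector with `Q w = 1`. -/
private lemma exists_transvection {V : Type} [AddCommGroup V] [Module (ZMod 2) V]
    (Q : QuadraticForm (ZMod 2) V) (w : V) (hw : Q w = 1) :
    ∃ g : V ≃ₗ[ZMod 2] V, (∀ v, Q (g v) = Q v) ∧
      ∀ x, g x = x + polar Q x w • w := by
  have hQadd : ∀ x y : V, Q (x + y) = Q x + Q y + polar (⇑Q) x y :=
    fun x y => QuadraticMap.map_add (⇑Q) x y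
  set M : V →ₗ[ZMod 2] V :=
    LinearMap.id + (Q.polarBilin.flip w).smulRight w with hM
  have hMx : ∀ x, M x = x + polar Q x w • w := by
    intro x
    simp [hM, LinearMap.smulRight_apply, polarBilin_apply_apply]
  have hww : polar Q w w = 0 := by
    rw [polar_self]; rw [two_smul, hw]; decide
  have hpol : ∀ x, polar Q (M x) w = polar Q x w := by
    intro x
    rw [hMx, polar_add_left, polar_smul_left, hww, smul_zero, add_zero]
  have hinv : Function.Involutive M := by
    intro x
    rw [hMx (M x), hpol, hMx, add_assoc, ← add_smul, z2add, zero_smul, add_zero]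
  have hiso : ∀ v, Q (M v) = Q v := by
    intro v
    rw [hMx, hQadd, QuadraticMap.map_smul, polar_smul_right, hw]
    simp only [smul_eq_mul]
    generalize Q v = q
    generalize polar (⇑Q) v w = a
    revert q a
    decide
  exact ⟨LinearEquiv.ofInvolutive M hinv, by
    simp only [LinearEquiv.coe_ofInvolutive]; exact hiso, by
    simp only [LinearEquiv.coe_ofInvolutive]; exact hMx⟩

/-- The Eichler (Siegel) transformation attached to an isotropic `w` and `u ⊥ w`. -/
private lemma exists_eichler {V : Type} [AddCommGroup V] [Module (ZMod 2) V]
    (Q : QuadraticForm (ZMod 2) V) (w u : V) (hw : Q w = 0) (hwu : polar Q w u = 0) :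
    ∃ g : V ≃ₗ[ZMod 2] V, (∀ v, Q (g v) = Q v) ∧
      ∀ x, g x = x + polar Q x w • u + (polar Q x u + Q u * polar Q x w) • w := by
  have hQadd : ∀ x y : V, Q (x + y) = Q x + Q y + polar (⇑Q) x y :=
    fun x y => QuadraticMap.map_add (⇑Q) x y
  have huw : polar Q u w = 0 := by rw [polar_comm]; exact hwu
  have hww : polar Q w w = 0 := by
    rw [polar_self, two_smul, hw]; decide
  have huu : polar Q u u = 0 := by
    rw [polar_self, two_smul, z2add]
  set M : V →ₗ[ZMod 2] V :=
    LinearMap.id + (Q.polarBilin.flip w).smulRight u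
      + (Q.polarBilin.flip u + Q u • Q.polarBilin.flip w).smulRight w with hM
  have hMx : ∀ x, M x = x + polar Q x w • u + (polar Q x u + Q u * polar Q x w) • w := by
    intro x
    simp [hM, LinearMap.smulRight_apply, polarBilin_apply_apply, add_smul, mul_smul,
      smul_eq_mul]
  have hpolw : ∀ x, polar Q (M x) w = polar Q x w := by
    intro x
    rw [hMx, polar_add_left, polar_add_left, polar_smul_left, polar_smul_left, huw, hww,
      smul_zero, smul_zero, add_zero, add_zero]
  have hpolu : ∀ x, polar Q (M x) u = polar Q x u := by
    intro x
    rw [hMx, polar_add_left, polar_add_left, polar_smul_left, polar_smul_left, huu, hwu,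
      smul_zero, smul_zero, add_zero, add_zero]
  have hinv : Function.Involutive M := by
    intro x
    rw [hMx (M x), hpolw, hpolu, hMx]
    set p := polar (⇑Q) x w • u with hp
    set q := (polar (⇑Q) x u + Q u * polar (⇑Q) x w) • w with hq
    have hre : x + p + q + p + q = x + (p + p) + (q + q) := by abel
    rw [hre, addV_self, addV_self, add_zero, add_zero]
  have hiso : ∀ v, Q (M v) = Q v := by
    intro v
    rw [hMx, hQadd, hQadd, QuadraticMap.map_smul, QuadraticMap.map_smul,
      polar_smul_right, polar_smul_right, polar_add_left, polar_smul_left,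
      hw, huw]
    simp only [smul_eq_mul]
    generalize Q v = s
    generalize polar (⇑Q) v w = a
    generalize polar (⇑Q) v u = b
    generalize Q u = qu
    revert s a b qu
    decide
  exact ⟨LinearEquiv.ofInvolutive M hinv, by
    simp only [LinearEquiv.coe_ofInvolutive]; exact hiso, by
    simp only [LinearEquiv.coe_ofInvolutive]; exact hMx⟩

/-- If the polar form is nondegenerate and `d ∉ S`, there is `u` orthogonal to `S`
pairing to `1` with `d`. -/
private lemma exists_orth {V : Type} [AddCommGroup V] [Module (ZMod 2) V]
    [FiniteDimensional (ZMod 2) V] (Q : QuadraticForm (ZMod 2) V)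
    (hQ : ∀ v : V, (∀ w : V, polar Q v w = 0) → v = 0)
    (S : Submodule (ZMod 2) V) (d : V) (hd : d ∉ S) :
    ∃ u : V, polar Q d u = 1 ∧ ∀ s ∈ S, polar Q s u = 0 := by
  set β : V →ₗ[ZMod 2] Module.Dual (ZMod 2) V := Q.polarBilin with hβ
  have hβinj : Function.Injective β := by
    intro a b hab
    have h0 : β (a - b) = 0 := by rw [LinearMap.map_sub, hab, sub_self]
    have : a - b = 0 := by
      apply hQ
      intro w
      have := congrArg (fun (f : Module.Dual (ZMod 2) V) => f w) h0
      simpa [hβ, polarBilin_apply_apply] using this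
    exact sub_eq_zero.mp this
  have hβsurj : Function.Surjective β :=
    (LinearMap.injective_iff_surjective_of_finrank_eq_finrank
      Subspace.dual_finrank_eq.symm).mp hβinj
  have hd0 : S.mkQ d ≠ 0 := by
    simpa [Submodule.Quotient.mk_eq_zero] using hd
  obtain ⟨ψ, hψ⟩ : ∃ ψ : Module.Dual (ZMod 2) (V ⧸ S), ψ (S.mkQ d) ≠ 0 := by
    by_contra h
    push_neg at h
    exact hd0 ((Module.forall_dual_apply_eq_zero_iff (ZMod 2) (S.mkQ d)).mp h)
  obtain ⟨u, hu⟩ := hβsurj (ψ.comp S.mkQ)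
  have hval : ∀ x, polar Q u x = ψ (S.mkQ x) := by
    intro x
    have := congrArg (fun (f : Module.Dual (ZMod 2) V) => f x) hu
    simpa [hβ, polarBilin_apply_apply] using this
  refine ⟨u, ?_, ?_⟩
  · rw [polar_comm, hval]
    exact z2one hψ
  · intro s hs
    rw [polar_comm, hval]
    have : S.mkQ s = 0 := (Submodule.Quotient.mk_eq_zero S).mpr hs
    rw [this, map_zero]

/-- Inductive core of Witt's extension theorem over `𝔽₂`. -/
private lemma witt_aux {V : Type} [AddCommGroup V] [Module (ZMod 2) V]
    [FiniteDimensional (ZMod 2) V] (Q : QuadraticForm (ZMod 2) V)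
    (hQ : ∀ v : V, (∀ w : V, polar Q v w = 0) → v = 0) :
    ∀ (n : ℕ) (D : Submodule (ZMod 2) V) (φ : D →ₗ[ZMod 2] V),
      Module.finrank (ZMod 2) D = n → Function.Injective φ →
      (∀ x : D, Q (φ x) = Q (x : V)) →
      ∃ g : V ≃ₗ[ZMod 2] V, (∀ v, Q (g v) = Q v) ∧ ∀ x : D, g (x : V) = φ x := by
  have hQadd : ∀ x y : V, Q (x + y) = Q x + Q y + polar (⇑Q) x y :=
    fun x y => QuadraticMap.map_add (⇑Q) x y
  intro n
  induction n with
  | zero =>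
    intro D φ hrank _ _
    have hD : D = ⊥ := Submodule.finrank_eq_zero.mp hrank
    refine ⟨LinearEquiv.refl _ _, fun v => rfl, ?_⟩
    intro x
    have hx : (x : V) = 0 := (Submodule.eq_bot_iff D).mp hD (x : V) x.2
    have hx0 : x = 0 := Subtype.ext hx
    rw [hx0]
    simp
  | succ n IH =>
    intro D φ hrank hinj hiso
    have hDne : D ≠ ⊥ := by
      intro h
      rw [h, finrank_bot] at hrank
      omega
    obtain ⟨d, hdD, hd0⟩ := (Submodule.ne_bot_iff D).mp hDne
    set dD : D := ⟨d, hdD⟩ with hdDdef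
    have hdD0 : dD ≠ 0 := by
      intro h
      exact hd0 (congrArg Subtype.val h)
    obtain ⟨Hc, hHc⟩ := Submodule.exists_isCompl (Submodule.span (ZMod 2) {dD})
    set H : Submodule (ZMod 2) V := Hc.map D.subtype with hHdef
    have hHD : H ≤ D := Submodule.map_subtype_le D Hc
    have hHrank : Module.finrank (ZMod 2) H = n := by
      have h1 := Submodule.finrank_add_eq_of_isCompl hHc
      rw [finrank_span_singleton hdD0, hrank] at h1
      rw [hHdef, Submodule.finrank_map_subtype_eq]
      omega
    have hsup : H ⊔ Submodule.span (ZMod 2) {d} = D := by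
      have hmap : Submodule.map D.subtype (Submodule.span (ZMod 2) {dD})
          = Submodule.span (ZMod 2) {d} := by
        rw [Submodule.map_span, Set.image_singleton]
        rfl
      rw [hHdef, ← hmap, ← Submodule.map_sup, sup_comm, hHc.sup_eq_top,
        Submodule.map_top, Submodule.range_subtype]
    have hdecomp : ∀ x : D, ∃ h : V, h ∈ H ∧ ∃ c : ZMod 2, (x : V) = h + c • d := by
      intro x
      have hx : (x : V) ∈ H ⊔ Submodule.span (ZMod 2) {d} := by rw [hsup]; exact x.2
      rw [Submodule.mem_sup] at hx
      obtain ⟨y, hy, z, hz, hyz⟩ := hx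
      rw [Submodule.mem_span_singleton] at hz
      obtain ⟨c, rfl⟩ := hz
      exact ⟨y, hy, c, hyz.symm⟩
    set φ' : H →ₗ[ZMod 2] V := φ.comp (Submodule.inclusion hHD) with hφ'def
    obtain ⟨g, hgQ, hgH⟩ := IH H φ' hHrank
      (hinj.comp (Submodule.inclusion_injective hHD))
      (fun x => by
        rw [hφ'def]
        simpa [Submodule.coe_inclusion] using hiso (Submodule.inclusion hHD x))
    set σ : D →ₗ[ZMod 2] V := g.symm.toLinearMap.comp φ with hσdef
    have hσ : ∀ x : D, σ x = g.symm (φ x) := fun _ => rfl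
    have hgsymmQ : ∀ v, Q (g.symm v) = Q v := by
      intro v
      rw [← hgQ (g.symm v), g.apply_symm_apply]
    have hσQ : ∀ x : D, Q (σ x) = Q (x : V) := by
      intro x
      rw [hσ, hgsymmQ, hiso]
    have hσinj : Function.Injective σ := by
      intro a b hab
      exact hinj (g.symm.injective hab)
    have hσH : ∀ (x : D), (x : V) ∈ H → σ x = (x : V) := by
      intro x hx
      have h2 : Submodule.inclusion hHD (⟨(x : V), hx⟩ : H) = x := Subtype.ext rfl
      have h1 := hgH ⟨(x : V), hx⟩
      rw [hφ'def] at h1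
      simp only [LinearMap.comp_apply, h2] at h1
      rw [hσ, ← h1, g.symm_apply_apply]
    set w : V := σ dD + d with hwdef
    have hpolarHw : ∀ h ∈ H, polar Q w h = 0 := by
      intro h hh
      set hD : D := ⟨h, hHD hh⟩ with hhDdef
      have hσh : σ hD = h := hσH hD hh
      have e1 : Q (σ (dD + hD)) = Q ((dD + hD : D) : V) := hσQ _
      rw [LinearMap.map_add, hσh] at e1
      have e2 : ((dD + hD : D) : V) = d + h := rfl
      rw [e2, hQadd, hQadd, hσQ dD] at e1
      have e3 : polar Q (σ dD) h = polar Q d h := by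
        have hdd : ((dD : D) : V) = d := rfl
        rw [hdd] at e1
        exact add_left_cancel e1
      rw [hwdef, polar_add_left, e3, z2add]
    have hQw : Q w = polar Q (σ dD) d := by
      rw [hwdef, hQadd, hσQ dD]
      show Q d + Q d + polar Q (σ dD) d = _
      rw [z2add, zero_add]
    by_cases hw0 : w = 0
    · have hσd : σ dD = d := eq_of_add_eq_zero' hw0
      refine ⟨g, hgQ, ?_⟩
      intro x
      obtain ⟨h, hh, c, hx⟩ := hdecomp x
      have hxD : x = (⟨h, hHD hh⟩ : D) + c • dD := Subtype.ext (by simp [hx]; rfl)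
      have hσx : σ x = (x : V) := by
        have hstep : σ x = h + c • d := by
          rw [hxD, LinearMap.map_add, LinearMap.map_smul, hσH ⟨h, hHD hh⟩ hh, hσd]
        rw [hstep, ← hx]
      calc g (x : V) = g (σ x) := by rw [hσx]
        _ = φ x := by rw [hσ, g.apply_symm_apply]
    · have key : ∃ E : V ≃ₗ[ZMod 2] V, (∀ v, Q (E v) = Q v) ∧
          (∀ h ∈ H, E h = h) ∧ E d = σ dD := by
        have hds : d + w = σ dD := by
          rw [hwdef, add_comm (σ dD) d, ← add_assoc, addV_self, zero_add]
        rcases z2cases (Q w) with h0 | h1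
        · -- Eichler case
          have hwd : polar Q w d = 0 := by
            rw [hwdef, polar_add_left, polar_self, two_smul, z2add, add_zero, ← hQw, h0]
          have hdnot : d ∉ H ⊔ Submodule.span (ZMod 2) {w} := by
            intro hmem
            rw [Submodule.mem_sup] at hmem
            obtain ⟨h, hh, z, hz, hsum⟩ := hmem
            rw [Submodule.mem_span_singleton] at hz
            obtain ⟨c, rfl⟩ := hz
            rcases z2cases c with hc | hc
            · rw [hc, zero_smul, add_zero] at hsum
              rw [hsum] at hh
              obtain ⟨y, hy, hyd⟩ := hh
              have : y = dD := Subtype.ext hyd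
              rw [this] at hy
              exact hdD0 (Submodule.disjoint_def.mp hHc.disjoint.symm dD hy
                (Submodule.mem_span_singleton_self dD))
            · rw [hc, one_smul] at hsum
              have hσdh : σ dD = h := by
                rw [← hds, ← hsum, add_assoc, addV_self, add_zero]
              have hσhh : σ (⟨h, hHD hh⟩ : D) = h := hσH _ hh
              have heq : dD = (⟨h, hHD hh⟩ : D) := hσinj (by rw [hσdh, hσhh])
              have hdh : d = h := congrArg Subtype.val heq
              apply hw0
              have hcanc : h + w = h + 0 := by rw [add_zero, hsum, hdh]
              exact add_left_cancel hcanc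
          obtain ⟨u, hdu, hSu⟩ := exists_orth Q hQ (H ⊔ Submodule.span (ZMod 2) {w}) d hdnot
          have hwu : polar Q w u = 0 :=
            hSu w (Submodule.mem_sup_right (Submodule.mem_span_singleton_self w))
          obtain ⟨E, hEQ, hEx⟩ := exists_eichler Q w u h0 hwu
          refine ⟨E, hEQ, ?_, ?_⟩
          · intro h hh
            rw [hEx]
            have h1 : polar Q h w = 0 := by rw [polar_comm]; exact hpolarHw h hh
            have h2 : polar Q h u = 0 := hSu h (Submodule.mem_sup_left hh)
            rw [h1, h2, zero_smul, add_zero, mul_zero, add_zero, zero_smul, add_zero]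
          · rw [hEx]
            have h1 : polar Q d w = 0 := by rw [polar_comm]; exact hwd
            rw [h1, hdu, zero_smul, add_zero, mul_zero, add_zero, one_smul, hds]
        · -- transvection case
          obtain ⟨E, hEQ, hEx⟩ := exists_transvection Q w h1
          refine ⟨E, hEQ, ?_, ?_⟩
          · intro h hh
            rw [hEx, polar_comm, hpolarHw h hh, zero_smul, add_zero]
          · rw [hEx]
            have hdw : polar Q d w = 1 := by
              rw [hwdef, polar_add_right, polar_self, two_smul, z2add, add_zero,
                polar_comm, ← hQw, h1]
            rw [hdw, one_smul, hds]
      obtain ⟨E, hEQ, hEH, hEd⟩ := key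
      refine ⟨E.trans g, ?_, ?_⟩
      · intro v
        show Q (g (E v)) = Q v
        rw [hgQ, hEQ]
      · intro x
        obtain ⟨h, hh, c, hx⟩ := hdecomp x
        have hxD : x = (⟨h, hHD hh⟩ : D) + c • dD := Subtype.ext (by simp [hx]; rfl)
        have hE1 : E (x : V) = h + c • σ dD := by
          rw [hx, LinearEquiv.map_add, LinearEquiv.map_smul, hEH h hh, hEd]
        have hE2 : σ x = h + c • σ dD := by
          rw [hxD, LinearMap.map_add, LinearMap.map_smul, hσH ⟨h, hHD hh⟩ hh]
        calc (E.trans g) (x : V) = g (E (x : V)) := rfl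
          _ = g (σ x) := by rw [hE1, hE2]
          _ = φ x := by rw [hσ, g.apply_symm_apply]

/-- Witt's theorem for possibly degenerate subspaces over `𝔽₂`: any isometry between
(possibly degenerate) subspaces of a finite-dimensional quadratic `𝔽₂`-space with
nondegenerate polar form extends to an isometry of the whole space. -/
theorem witt_extension_degenerate_subspaces
    (V : Type) [AddCommGroup V] [Module (ZMod 2) V] [FiniteDimensional (ZMod 2) V]
    (Q : QuadraticForm (ZMod 2) V)
    (hQ : ∀ v : V, (∀ w : V, polar Q v w = 0) → v = 0)
    (D D' : Submodule (ZMod 2) V) (f : D ≃ₗ[ZMod 2] D')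
    (hf : ∀ d : D, Q (f d : V) = Q (d : V)) :
    ∃ g : V ≃ₗ[ZMod 2] V, (∀ v : V, Q (g v) = Q v) ∧ ∀ d : D, g (d : V) = (f d : V) := by
  set φ : D →ₗ[ZMod 2] V := D'.subtype.comp f.toLinearMap with hφ
  have hφx : ∀ d : D, φ d = (f d : V) := fun _ => rfl
  have hφinj : Function.Injective φ := by
    intro a b hab
    exact f.injective (Subtype.ext hab)
  obtain ⟨g, hgQ, hgD⟩ := witt_aux Q hQ (Module.finrank (ZMod 2) D) D φ rfl hφinj
    (fun x => by rw [hφx]; exact hf x)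
  exact ⟨g, hgQ, fun d => by rw [hgD d, hφx]⟩
end

section
/- Let (V, q_V) and (W, q_W) be finite-dimensional F_2-vector spaces with quadratic forms whose polar bilinear forms are nondegenerate, and let f : V → W be any linear map. Then there exist a finite-dimensional F_2-vector space Y with a quadratic form q_Y whose polar form is nondegenerate, and a linear map g : V → W × Y, such that: (1) g preserves the quadratic forms, i.e. q_W(pr_W(g v)) + q_Y(pr_Y(g v)) = q_V(v) for all v in V; (2) pr_W ∘ g = f; and (3) pr_Y ∘ g is injective. -/
open QuadraticMap

/-- Any linear map `f : V → W` between nondegenerate quadratic `𝔽₂`-spaces lifts to a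
rank-zero morphism of `T_q`: there exist a finite-dimensional nondegenerate quadratic
space `(Y, q_Y)` and a linear map `g : V → W × Y` preserving the quadratic forms, whose
first component is `f` and whose second component is injective. -/
theorem exists_rank_zero_lift
    (V W : Type)
    [AddCommGroup V] [Module (ZMod 2) V] [FiniteDimensional (ZMod 2) V]
    [AddCommGroup W] [Module (ZMod 2) W] [FiniteDimensional (ZMod 2) W]
    (qV : QuadraticForm (ZMod 2) V) (qW : QuadraticForm (ZMod 2) W)
    (hV : ∀ v : V, (∀ v' : V, polar qV v v' = 0) → v = 0)
    (hW : ∀ w : W, (∀ w' : W, polar qW w w' = 0) → w = 0)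
    (f : V →ₗ[ZMod 2] W) :
    ∃ (Y : Type) (_ : AddCommGroup Y) (_ : Module (ZMod 2) Y)
      (_ : FiniteDimensional (ZMod 2) Y) (qY : QuadraticForm (ZMod 2) Y)
      (g : V →ₗ[ZMod 2] W × Y),
      (∀ y : Y, (∀ y' : Y, polar qY y y' = 0) → y = 0) ∧
      (∀ v : V, qW (g v).1 + qY (g v).2 = qV v) ∧
      (∀ v : V, (g v).1 = f v) ∧
      Function.Injective (fun v : V => (g v).2) := by
  refine ⟨V × W, inferInstance, inferInstance, inferInstance, qV.prod qW,
    f.prod (LinearMap.prod LinearMap.id f), ?_, ?_, ?_, ?_⟩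
  · rintro ⟨v, w⟩ h
    have hpol : ∀ (a b : V × W),
        polar (qV.prod qW) a b = polar qV a.1 b.1 + polar qW a.2 b.2 := by
      intro a b
      simp only [polar, QuadraticMap.prod_apply, Prod.fst_add, Prod.snd_add]
      abel
    have h1 : v = 0 := by
      apply hV
      intro v'
      have := h (v', 0)
      simpa [hpol] using this
    have h2 : w = 0 := by
      apply hW
      intro w'
      have := h (0, w')
      simpa [hpol] using this
    simp [h1, h2]
  · intro v
    simp only [LinearMap.prod_apply, Function.prod, QuadraticMap.prod_apply, LinearMap.id_apply]
    have : qW (f v) + qW (f v) = 0 := CharTwo.add_self_eq_zero _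
    rw [← add_assoc, add_comm (qW (f v)) (qV v), add_assoc, this, add_zero]
  · intro v; rfl
  · intro a b hab
    simpa using congrArg Prod.fst hab
end

section
/- Let C and D be small categories, A an abelian category, and F : C → D a functor that is full and essentially surjective. Then for every functor G : D → A and every monomorphism m : S → F ⋙ G in the functor category Func(C, A), there exists a functor H : D → A such that S is isomorphic to F ⋙ H. -/
open CategoryTheory

universe u₁ u₂ v w

/-- If `F : C → D` is full and essentially surjective, then any subobject of a functor in
the image of the precomposition functor `− ∘ F : Func(D, A) → Func(C, A)` is isomorphic
to a functor in the image of the precomposition functor. -/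
theorem subfunctor_of_precomposition_mem_image
    {C : Type u₁} [SmallCategory C] {D : Type u₂} [SmallCategory D]
    {A : Type v} [Category.{w} A] [Abelian A]
    (F : C ⥤ D) [F.Full] [F.EssSurj]
    (G : D ⥤ A) (S : C ⥤ A) (m : S ⟶ F ⋙ G) [Mono m] :
    ∃ H : D ⥤ A, Nonempty (S ≅ F ⋙ H) := by
  -- `m` is a componentwise monomorphism
  have hmono : ∀ c : C, Mono (m.app c) := fun c => inferInstance
  -- key: `S.map g` only depends on `F.map g`
  have key : ∀ {c c' : C} (g g' : c ⟶ c'), F.map g = F.map g' → S.map g = S.map g' := by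
    intro c c' g g' h
    rw [← cancel_mono (m.app c')]
    have h1 := m.naturality g
    have h2 := m.naturality g'
    dsimp at h1 h2
    rw [h1, h2, h]
  let H : D ⥤ A :=
    { obj := fun d => S.obj (F.objPreimage d)
      map := fun {d d'} f =>
        S.map (F.preimage ((F.objObjPreimageIso d).hom ≫ f ≫ (F.objObjPreimageIso d').inv))
      map_id := fun d => by
        rw [show 𝟙 (S.obj (F.objPreimage d)) = S.map (𝟙 _) from (S.map_id _).symm]
        apply key
        simp
      map_comp := fun {d d' d''} f g => by
        rw [← S.map_comp]
        apply key
        simp }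
  refine ⟨H, ⟨NatIso.ofComponents (fun c =>
    ⟨S.map (F.preimage (F.objObjPreimageIso (F.obj c)).inv),
     S.map (F.preimage (F.objObjPreimageIso (F.obj c)).hom), ?_, ?_⟩) ?_⟩⟩
  · rw [← S.map_comp, show 𝟙 (S.obj c) = S.map (𝟙 c) from (S.map_id _).symm]
    apply key
    simp
  · dsimp
    rw [← S.map_comp, ← S.map_id]
    apply key
    simp
  · intro c c' φ
    dsimp [H]
    rw [← S.map_comp, ← S.map_comp]
    apply key
    simp
end

section
/- Let C and D be small categories, A an abelian category, and F : C → D a functor that is full and essentially surjective. Then for every functor G : D → A and every epimorphism p : F ⋙ G → S in the functor category Func(C, A), there exists a functor H : D → A such that S is isomorphic to F ⋙ H. -/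
open CategoryTheory

universe u₁ u₂ v w

section Aux

variable {C : Type u₁} [SmallCategory C] {D : Type u₂} [SmallCategory D]
  {A : Type v} [Category.{w} A]

/-- Auxiliary: a functor `S : C ⥤ A` identifying morphisms with equal `F`-image descends
to `D` when `F` is full and essentially surjective. -/
noncomputable def descendFunctor (F : C ⥤ D) [F.Full] [F.EssSurj] (S : C ⥤ A)
    (hS : ∀ {c c' : C} (f g : c ⟶ c'), F.map f = F.map g → S.map f = S.map g) :
    D ⥤ A where
  obj d := S.obj (F.objPreimage d)
  map {d d'} φ := S.map (F.preimage
    ((F.objObjPreimageIso d).hom ≫ φ ≫ (F.objObjPreimageIso d').inv))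
  map_id d := by
    rw [show S.map _ = S.map (𝟙 (F.objPreimage d)) from
      hS _ _ (by simp), S.map_id]
  map_comp {d d' d''} φ ψ := by
    rw [← S.map_comp]
    exact hS _ _ (by simp)

end Aux

/-- If `F : C → D` is full and essentially surjective, then any quotient of a functor in
the image of the precomposition functor `− ∘ F : Func(D, A) → Func(C, A)` is isomorphic
to a functor in the image of the precomposition functor. -/
theorem quotient_of_precomposition_mem_image
    {C : Type u₁} [SmallCategory C] {D : Type u₂} [SmallCategory D]
    {A : Type v} [Category.{w} A] [Abelian A]
    (F : C ⥤ D) [F.Full] [F.EssSurj]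
    (G : D ⥤ A) (S : C ⥤ A) (p : F ⋙ G ⟶ S) [Epi p] :
    ∃ H : D ⥤ A, Nonempty (S ≅ F ⋙ H) := by
  have hS : ∀ {c c' : C} (f g : c ⟶ c'), F.map f = F.map g → S.map f = S.map g := by
    intro c c' f g h
    have hepi : Epi (p.app c) := inferInstance
    rw [← cancel_epi (p.app c), ← p.naturality, ← p.naturality]
    dsimp
    rw [h]
  refine ⟨descendFunctor F S hS, ⟨NatIso.ofComponents (fun c => ?_) (fun {c c'} f => ?_)⟩⟩
  · exact
      { hom := S.map (F.preimage (F.objObjPreimageIso (F.obj c)).inv)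
        inv := S.map (F.preimage (F.objObjPreimageIso (F.obj c)).hom)
        hom_inv_id := by
          dsimp only [Functor.comp_obj, descendFunctor]
          rw [← S.map_comp, show S.map _ = S.map (𝟙 c) from hS _ _ (by simp), S.map_id]
        inv_hom_id := by
          dsimp only [Functor.comp_obj, descendFunctor]
          rw [← S.map_comp,
            show S.map _ = S.map (𝟙 (F.objPreimage (F.obj c))) from hS _ _ (by simp),
            S.map_id] }
  · dsimp [descendFunctor]
    rw [← S.map_comp, ← S.map_comp]
    exact hS _ _ (by simp)
end

section
/- The natural 2-dimensional module F_2^2, with GL_2(F_2) acting by matrix multiplication, is a projective module over the group algebra F_2[GL_2(F_2)]. -/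
/-- The group `GL₂(𝔽₂)`. -/
abbrev G2 : Type := GL (Fin 2) (ZMod 2)

/-- The natural (tautological) representation of `GL₂(𝔽₂)` on `𝔽₂²`. -/
noncomputable def natRep : Representation (ZMod 2) G2 (Fin 2 → ZMod 2) where
  toFun g := Matrix.mulVecLin (g : Matrix (Fin 2) (Fin 2) (ZMod 2))
  map_one' := by
    ext v
    simp
  map_mul' g h := by
    ext v
    simp [Matrix.mulVecLin_mul]

/-- The `ZMod 2`-linear "matrix coefficient" map `𝔽₂² → 𝔽₂[GL₂(𝔽₂)]`,
`m ↦ ∑ g, (g⁻¹ • m)₀ · g`. -/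
noncomputable def secAux : (Fin 2 → ZMod 2) →ₗ[ZMod 2] MonoidAlgebra (ZMod 2) G2 where
  toFun m := ∑ g : G2, MonoidAlgebra.single g (natRep g⁻¹ m 0)
  map_add' x y := by
    simp only [map_add, Pi.add_apply, MonoidAlgebra.single_add]
    rw [Finset.sum_add_distrib]
  map_smul' c x := by
    simp only [map_smul, Pi.smul_apply, RingHom.id_apply, Finset.smul_sum, smul_eq_mul]
    exact Finset.sum_congr rfl fun g _ => (MonoidAlgebra.smul_single' c g _).symm

lemma secAux_apply (m : Fin 2 → ZMod 2) :
    secAux m = ∑ g : G2, MonoidAlgebra.single g (natRep g⁻¹ m 0) := rfl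

lemma secAux_equivariant (r : MonoidAlgebra (ZMod 2) G2) (m : Fin 2 → ZMod 2) :
    secAux (natRep.asAlgebraHom r m) = r * secAux m := by
  induction r using MonoidAlgebra.induction_linear with
  | zero => simp
  | add f g hf hg => simp [map_add, add_mul, hf, hg]
  | single g c =>
      rw [Representation.asAlgebraHom_single, LinearMap.smul_apply, map_smul,
        secAux_apply, secAux_apply, Finset.smul_sum, Finset.mul_sum]
      refine Fintype.sum_equiv (Equiv.mulLeft g⁻¹) _ _ fun x => ?_
      simp only [Equiv.coe_mulLeft, MonoidAlgebra.single_mul_single, MonoidAlgebra.smul_single',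
        mul_inv_rev, inv_inv, map_mul]
      rw [mul_inv_cancel_left]
      simp [map_mul, mul_comm]

/-- The section of the evaluation map, as a `MonoidAlgebra`-linear map. -/
noncomputable def sec : natRep.asModule →ₗ[MonoidAlgebra (ZMod 2) G2]
    MonoidAlgebra (ZMod 2) G2 where
  toFun m := secAux (natRep.asModuleEquiv m)
  map_add' x y := by simp
  map_smul' r m := by
    simp only [RingHom.id_apply, Representation.asModuleEquiv_map_smul]
    rw [secAux_equivariant]
    rfl

lemma key : ∀ m : Fin 2 → ZMod 2,
    ∑ g : G2, ((g⁻¹ : G2).val.mulVec m 0) • (g.val.mulVec ![1, 0]) = m := by decide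

/-- The natural `2`-dimensional module `𝔽₂²` is projective over the group algebra
`𝔽₂[GL₂(𝔽₂)]`. -/
theorem natural_module_projective :
    Module.Projective (MonoidAlgebra (ZMod 2) G2) natRep.asModule := by
  refine Module.Projective.of_split (M := MonoidAlgebra (ZMod 2) G2) sec
    (LinearMap.toSpanSingleton _ _ (natRep.asModuleEquiv.symm ![1, 0])) ?_
  ext m
  show (secAux (natRep.asModuleEquiv m)) • (natRep.asModuleEquiv.symm ![1, 0]) = m
  apply natRep.asModuleEquiv.injective
  rw [Representation.asModuleEquiv_map_smul, secAux_apply, map_sum]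
  simp only [Representation.asAlgebraHom_single, LinearMap.smul_apply, LinearMap.coe_sum,
    Finset.sum_apply, AddEquiv.apply_symm_apply]
  exact key (natRep.asModuleEquiv m)
end
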